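/- For 0 < q < 1, integer r \ge 2, \delta > 0, and 1 \le l \le r-1: D_q^l \cos_r(x, q^r; \delta) = -q^{-\delta(r-l)} \sin_{r,l}(q^\delta x, q^r; \delta) and D_q^r \cos_r(x, q^r; \delta) = -\cos_r(q^\delta x, q^r; \delta), where \sin_{r,l}(x, q^r; \delta) = \sum_{m \ge 0} (-1)^m q^{\delta r \binom{m}{2}} x^{rm + r - l}/[rm + r - l]_q!. -/

import Mathlib

/-- The q-Pochhammer symbol `(a; q)_n`. -/
noncomputable def qPoch (a q : ℝ) (n : ℕ) : ℝ :=
  ∏ j ∈ Finset.range n, (1 - a * q ^ j)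

/-- The q-factorial `[m]_q! = (q;q)_m / (1-q)^m`. -/
noncomputable def qFact (q : ℝ) (n : ℕ) : ℝ := qPoch q q n / (1 - q) ^ n

/-- The q-derivative. -/
noncomputable def Dq (q : ℝ) (f : ℝ → ℝ) : ℝ → ℝ :=
  fun x => (f (q * x) - f x) / ((q - 1) * x)

/-- `cos_r(x, q^r; δ) = ∑_m (-1)^m q^{δ r C(m,2)} x^{rm}/[rm]_q!`. -/
noncomputable def qCos (q : ℝ) (r : ℕ) (δ : ℝ) (x : ℝ) : ℝ :=
  ∑' m : ℕ, (-1 : ℝ) ^ m * q ^ (δ * (r : ℝ) * (m.choose 2 : ℝ)) * x ^ (r * m) /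
    qFact q (r * m)

/-- `sin_{r,l}(x, q^r; δ) = ∑_m (-1)^m q^{δ r C(m,2)} x^{rm+r-l}/[rm+r-l]_q!`. -/
noncomputable def qSin (q : ℝ) (r l : ℕ) (δ : ℝ) (x : ℝ) : ℝ :=
  ∑' m : ℕ, (-1 : ℝ) ^ m * q ^ (δ * (r : ℝ) * (m.choose 2 : ℝ)) *
    x ^ (r * m + r - l) / qFact q (r * m + r - l)

/-!
Dropping the constant term of `cos_r` and shifting `m ↦ m + 1` gives
`cos_r(x) = 1 - T_r(x)` with `T_k(x) = ∑ (-1)^m q^{δ r C(m+1,2)} x^{rm+k} / [rm+k]_q!`.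
The factor `q^{δ r C(m,2)}` makes these series converge absolutely everywhere, so `D_q` acts
termwise, and `D_q (x^{n+1}/[n+1]_q!) = x^n/[n]_q!` gives `D_q T_{k+1} = T_k`. Hence
`D_q^l cos_r = -T_{r-l}` for `1 ≤ l ≤ r`. Finally
`δ r C(m+1,2) = δ r C(m,2) + δ (rm + r - l) - δ (r - l)` identifies `T_{r-l}(x)` with
`q^{-δ(r-l)} sin_{r,l}(q^δ x)`, and `sin_{r,r} = cos_r`.
-/

open Finset Filter Topology

lemma Nat.choose_two_succ (m : ℕ) : (m + 1).choose 2 = m.choose 2 + m := by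
  rw [Nat.choose_succ_succ', Nat.choose_one_right, add_comm]

lemma summable_pow_choose_two_mul_pow {ρ : ℝ} (hρ0 : 0 ≤ ρ) (hρ1 : ρ < 1) (t : ℝ) :
    Summable fun m : ℕ => ρ ^ m.choose 2 * t ^ m := by
  have hratio : Tendsto (fun m : ℕ => ρ ^ m * |t|) atTop (𝓝 0) := by
    simpa using (tendsto_pow_atTop_nhds_zero_of_lt_one hρ0 hρ1).mul_const |t|
  refine summable_of_ratio_norm_eventually_le (r := 1 / 2) (by norm_num) ?_
  filter_upwards [hratio.eventually (eventually_le_nhds (by norm_num : (0 : ℝ) < 1 / 2))]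
    with m hm
  simp only [Nat.choose_two_succ, norm_mul, norm_pow, Real.norm_eq_abs, abs_of_nonneg hρ0]
  calc ρ ^ (m.choose 2 + m) * |t| ^ (m + 1) = (ρ ^ m * |t|) * (ρ ^ m.choose 2 * |t| ^ m) := by
        ring
    _ ≤ 1 / 2 * (ρ ^ m.choose 2 * |t| ^ m) := by gcongr

lemma qFact_zero (q : ℝ) : qFact q 0 = 1 := by
  simp [qFact, qPoch]

section

variable {q : ℝ}

lemma qFact_succ (hq : q ≠ 1) (n : ℕ) :
    qFact q (n + 1) = qFact q n * ∑ i ∈ range (n + 1), q ^ i := by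
  have h1q : 1 - q ≠ 0 := sub_ne_zero.mpr hq.symm
  have hgeom : ∑ i ∈ range (n + 1), q ^ i = (1 - q * q ^ n) / (1 - q) := by
    rw [eq_div_iff h1q, ← pow_succ', ← neg_sub q 1, mul_neg, geom_sum_mul]
    ring
  rw [hgeom, qFact, qFact, qPoch, qPoch, prod_range_succ, pow_succ]
  field_simp

lemma one_le_qFact (hq0 : 0 ≤ q) (hq1 : q ≠ 1) (n : ℕ) : 1 ≤ qFact q n := by
  induction n with
  | zero => rw [qFact_zero]
  | succ n ih =>
    rw [qFact_succ hq1]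
    refine one_le_mul_of_one_le_of_one_le ih ?_
    simpa using single_le_sum (fun i _ => pow_nonneg hq0 i) (mem_range.mpr n.succ_pos)

lemma Dq_congr {f g : ℝ → ℝ} {x : ℝ} (hqx : f (q * x) = g (q * x)) (hx : f x = g x) :
    Dq q f x = Dq q g x := by
  simp only [Dq, hqx, hx]

lemma Dq_neg (f : ℝ → ℝ) (x : ℝ) : Dq q (fun y => -f y) x = -Dq q f x := by
  simp only [Dq]
  ring

lemma Dq_const_sub (c : ℝ) (f : ℝ → ℝ) (x : ℝ) : Dq q (fun y => c - f y) x = -Dq q f x := by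
  simp only [Dq]
  ring

lemma Dq_tsum {f : ℕ → ℝ → ℝ} {x : ℝ} (hqx : Summable fun m => f m (q * x))
    (hx : Summable fun m => f m x) :
    Dq q (fun y => ∑' m, f m y) x = ∑' m, Dq q (f m) x := by
  simp only [Dq]
  rw [← hqx.tsum_sub hx, tsum_div_const]

lemma Dq_mul_pow_succ_div_qFact (hq0 : 0 ≤ q) (hq1 : q ≠ 1) {x : ℝ} (hx : x ≠ 0) (a : ℝ)
    (n : ℕ) :
    Dq q (fun y => a * y ^ (n + 1) / qFact q (n + 1)) x = a * x ^ n / qFact q n := by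
  have hq1' : q - 1 ≠ 0 := sub_ne_zero.mpr hq1
  have hfact : qFact q n ≠ 0 := (zero_lt_one.trans_le (one_le_qFact hq0 hq1 n)).ne'
  have hgeom : ∑ i ∈ range (n + 1), q ^ i ≠ 0 := by
    rw [← mul_ne_zero_iff_right hq1', geom_sum_mul]
    exact sub_ne_zero.mpr ((pow_eq_one_iff_of_nonneg hq0 n.succ_ne_zero).not.mpr hq1)
  simp only [Dq, qFact_succ hq1, mul_pow]
  field_simp
  rw [← geom_sum_mul q (n + 1)]
  ring

end

section QCosTail

variable {q : ℝ} {r : ℕ} {δ : ℝ}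

noncomputable def qCosTailTerm (q : ℝ) (r : ℕ) (δ : ℝ) (k m : ℕ) (x : ℝ) : ℝ :=
  (-1 : ℝ) ^ m * q ^ (δ * r * ((m + 1).choose 2 : ℝ)) * x ^ (r * m + k) / qFact q (r * m + k)

noncomputable def qCosTail (q : ℝ) (r : ℕ) (δ : ℝ) (k : ℕ) (x : ℝ) : ℝ :=
  ∑' m : ℕ, qCosTailTerm q r δ k m x

lemma summable_qCosTailTerm (hq0 : 0 < q) (hq1 : q < 1) (hr : 0 < r) (hδ : 0 < δ) (k : ℕ)
    (x : ℝ) : Summable fun m => qCosTailTerm q r δ k m x := by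
  set ρ := q ^ (δ * r)
  have hρ1 : ρ < 1 := Real.rpow_lt_one hq0.le hq1 (by positivity)
  refine Summable.of_norm_bounded
    ((summable_pow_choose_two_mul_pow (by positivity) hρ1 (ρ * |x| ^ r)).mul_left (|x| ^ k))
    fun m => ?_
  have hcoef : q ^ (δ * r * ((m + 1).choose 2 : ℝ)) = ρ ^ m.choose 2 * ρ ^ m := by
    rw [Real.rpow_mul hq0.le, Real.rpow_natCast, Nat.choose_two_succ, pow_add]
  rw [qCosTailTerm, hcoef, norm_div, norm_mul, norm_mul, norm_pow, norm_neg, norm_one, one_pow,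
    one_mul, Real.norm_of_nonneg (by positivity), norm_pow, Real.norm_eq_abs,
    Real.norm_of_nonneg (zero_le_one.trans (one_le_qFact hq0.le hq1.ne _))]
  calc ρ ^ m.choose 2 * ρ ^ m * |x| ^ (r * m + k) / qFact q (r * m + k)
      ≤ ρ ^ m.choose 2 * ρ ^ m * |x| ^ (r * m + k) :=
        div_le_self (by positivity) (one_le_qFact hq0.le hq1.ne _)
    _ = |x| ^ k * (ρ ^ m.choose 2 * (ρ * |x| ^ r) ^ m) := by ring

lemma qCos_eq_one_sub_qCosTail (hq0 : 0 < q) (hq1 : q < 1) (hr : 0 < r) (hδ : 0 < δ)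
    (x : ℝ) : qCos q r δ x = 1 - qCosTail q r δ r x := by
  have hshift (m : ℕ) : (-1 : ℝ) ^ (m + 1) * q ^ (δ * r * ((m + 1).choose 2 : ℝ)) *
      x ^ (r * (m + 1)) / qFact q (r * (m + 1)) = -qCosTailTerm q r δ r m x := by
    rw [qCosTailTerm, mul_add_one, pow_succ]
    ring
  rw [qCos, tsum_eq_zero_add', qCosTail]
  · simp [hshift, tsum_neg, qFact_zero, sub_eq_add_neg]
  · simpa only [hshift] using (summable_qCosTailTerm hq0 hq1 hr hδ r x).neg

lemma Dq_qCosTail_succ (hq0 : 0 < q) (hq1 : q < 1) (hr : 0 < r) (hδ : 0 < δ) {x : ℝ}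
    (hx : x ≠ 0) (k : ℕ) : Dq q (qCosTail q r δ (k + 1)) x = qCosTail q r δ k x := by
  refine (Dq_tsum (summable_qCosTailTerm hq0 hq1 hr hδ (k + 1) (q * x))
    (summable_qCosTailTerm hq0 hq1 hr hδ (k + 1) x)).trans (tsum_congr fun m => ?_)
  exact Dq_mul_pow_succ_div_qFact hq0.le hq1.ne hx _ (r * m + k)

lemma iterate_Dq_qCos (hq0 : 0 < q) (hq1 : q < 1) (hr : 0 < r) (hδ : 0 < δ) {l : ℕ}
    (hl1 : 1 ≤ l) (hl : l ≤ r) {x : ℝ} (hx : x ≠ 0) :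
    (Dq q)^[l] (qCos q r δ) x = -qCosTail q r δ (r - l) x := by
  induction l, hl1 using Nat.le_induction generalizing x with
  | base =>
    obtain ⟨k, rfl⟩ : ∃ k, r = k + 1 := ⟨r - 1, by omega⟩
    rw [Function.iterate_one, funext (qCos_eq_one_sub_qCosTail hq0 hq1 hr hδ), Dq_const_sub,
      Dq_qCosTail_succ hq0 hq1 hr hδ hx, Nat.add_sub_cancel]
  | succ l hl1 ih =>
    obtain ⟨k, hk⟩ : ∃ k, r - l = k + 1 := ⟨r - l - 1, by omega⟩
    have hqx : q * x ≠ 0 := mul_ne_zero hq0.ne' hx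
    rw [hk] at ih
    rw [Function.iterate_succ_apply',
      Dq_congr (g := fun y => -qCosTail q r δ (k + 1) y) (ih (by omega) hqx) (ih (by omega) hx),
      Dq_neg, Dq_qCosTail_succ hq0 hq1 hr hδ hx, show r - (l + 1) = k by omega]

lemma qCosTail_sub_eq_qSin (hq0 : 0 < q) {l : ℕ} (hl : l ≤ r) (x : ℝ) :
    qCosTail q r δ (r - l) x = q ^ (-(δ * (r - l))) * qSin q r l δ (q ^ δ * x) := by
  rw [qSin, ← tsum_mul_left]
  refine tsum_congr fun m => ?_
  have hexp : r * m + r - l = r * m + (r - l) := by omega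
  have hq : q ^ (δ * r * ((m + 1).choose 2 : ℝ)) = q ^ (-(δ * (r - l))) *
      q ^ (δ * r * (m.choose 2 : ℝ)) * q ^ (δ * ((r * m + (r - l) : ℕ) : ℝ)) := by
    rw [← Real.rpow_add hq0, ← Real.rpow_add hq0, Nat.choose_two_succ]
    push_cast [Nat.cast_sub hl]
    ring_nf
  rw [qCosTailTerm, hexp, mul_pow, ← Real.rpow_natCast (q ^ δ), ← Real.rpow_mul hq0.le, hq]
  ring

lemma qSin_self : qSin q r r δ = qCos q r δ := by
  funext x
  simp only [qSin, qCos, Nat.add_sub_cancel]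

end QCosTail

theorem qCos_deriv_formulas_general (q : ℝ) (hq0 : 0 < q) (hq1 : q < 1)
    (r : ℕ) (δ : ℝ) (hδ : 0 < δ) (l : ℕ) (hl1 : 1 ≤ l) (hl2 : l ≤ r - 1)
    (x : ℝ) (hx : x ≠ 0) :
    (Dq q)^[l] (qCos q r δ) x =
      -(q ^ (-(δ * ((r : ℝ) - (l : ℝ))))) * qSin q r l δ (q ^ δ * x) ∧
    (Dq q)^[r] (qCos q r δ) x = - qCos q r δ (q ^ δ * x) := by
  have hr : 0 < r := by omega
  constructor
  · rw [iterate_Dq_qCos hq0 hq1 hr hδ hl1 (by omega) hx, qCosTail_sub_eq_qSin hq0 (by omega),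
      neg_mul]
  · rw [iterate_Dq_qCos hq0 hq1 hr hδ hr le_rfl hx, qCosTail_sub_eq_qSin hq0 le_rfl, qSin_self,
      sub_self, mul_zero, neg_zero, Real.rpow_zero, one_mul]

/-- The q-derivative formulas
`D_q^l cos_r(x,q^r;δ) = -q^{-δ(r-l)} sin_{r,l}(q^δ x, q^r; δ)` and
`D_q^r cos_r(x,q^r;δ) = -cos_r(q^δ x, q^r; δ)`. -/
theorem qCos_deriv_formulas (q : ℝ) (hq0 : 0 < q) (hq1 : q < 1)
    (r : ℕ) (hr : 2 ≤ r) (δ : ℝ) (hδ : 0 < δ) (l : ℕ) (hl1 : 1 ≤ l) (hl2 : l ≤ r - 1)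
    (x : ℝ) (hx : x ≠ 0) :
    (Dq q)^[l] (qCos q r δ) x =
      -(q ^ (-(δ * ((r : ℝ) - (l : ℝ))))) * qSin q r l δ (q ^ δ * x) ∧
    (Dq q)^[r] (qCos q r δ) x = - qCos q r δ (q ^ δ * x) :=
  qCos_deriv_formulas_general q hq0 hq1 r δ hδ l hl1 hl2 x hx
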